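/- arXiv:1502.03733 — 2 statements merged into one kernel-verified Lean document; each statement's English description precedes it below -/
import Mathlib

section
/- Let d ≥ 1 and p ≥ 1 be integers and let h > 0 be such that 1/h is a positive integer. Let W̃_{p,h} denote the linear span of all tensor-product functions (x₁,…,x_d) ↦ ∏_{l=1}^{d} f_l(x_l) with f_1,…,f_d ∈ S̃_{p,h}(0,1). Then every w ∈ W̃_{p,h} satisfies |w|_{H¹((0,1)^d)} ≤ 2·√(3d) · h^{−1} · ‖w‖_{L²((0,1)^d)}, where ‖v‖_{L²((0,1)^d)} := (∫_{(0,1)^d} v(x)² dx)^{1/2} and |w|_{H¹((0,1)^d)} := (∫_{(0,1)^d} ‖∇w(x)‖² dx)^{1/2} (the gradient of w is defined off the null set of grid hyperplanes). -/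
open MeasureTheory Set

/-- The `L²(a,b)` norm of a function. -/
noncomputable def L2 (a b : ℝ) (v : ℝ → ℝ) : ℝ :=
  Real.sqrt (∫ x in Set.Ioo a b, v x ^ 2)

/-- `u` belongs to the spline space `S_{p,h}(a,b)` of maximum smoothness
(`u` is `(p-1)`-times continuously differentiable on `[a,b]` and coincides with a
polynomial of degree at most `p` on each of the `n = (b-a)/h` subintervals). -/
def IsSplineOn (p n : ℕ) (h a b : ℝ) (u : ℝ → ℝ) : Prop :=
  ContDiffOn ℝ (p - 1 : ℕ) u (Set.Icc a b) ∧
  ∀ j < n, ∃ P : Polynomial ℝ, P.natDegree ≤ p ∧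
    ∀ x ∈ Set.Icc (a + j * h) (a + (j + 1) * h), u x = P.eval x

/-- `u ∈ H¹(a,b)` with weak derivative `g`: `u` is absolutely continuous on `[a,b]`
(an indefinite integral of the locally integrable `g`) and `g` is square-integrable. -/
def IsH1On (a b : ℝ) (u g : ℝ → ℝ) : Prop :=
  IntervalIntegrable g volume a b ∧
  (∀ x ∈ Set.Icc a b, u x = u a + ∫ t in a..x, g t) ∧
  IntegrableOn (fun x => g x ^ 2) (Set.Ioo a b)

/-- The reduced spline space `S̃_{p,h}(a,b)`: splines whose odd derivatives of order
`< p` vanish at both endpoints. -/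
def IsReducedSplineOn (p n : ℕ) (h a b : ℝ) (u : ℝ → ℝ) : Prop :=
  IsSplineOn p n h a b u ∧
  ∀ l : ℕ, 2 * l + 1 < p →
    iteratedDerivWithin (2 * l + 1) u (Set.Icc a b) a = 0 ∧
    iteratedDerivWithin (2 * l + 1) u (Set.Icc a b) b = 0

/-- The set of tensor-product functions `x ↦ ∏_l f_l(x_l)` with each factor in the
reduced spline space `S̃_{p,h}(0,1)`; its span is `W̃_{p,h}`. -/
def TensorReduced (p n d : ℕ) (h : ℝ) : Set ((Fin d → ℝ) → ℝ) :=
  { w | ∃ f : Fin d → ℝ → ℝ, (∀ l, IsReducedSplineOn p n h 0 1 (f l)) ∧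
      w = fun x => ∏ l, f l (x l) }

/-!
On each cell a reduced spline `u` is a polynomial `Pⱼ`. Put `N k = ∑ⱼ ∫_{cell j} (Pⱼ⁽ᵏ⁾)²`.
Integrating `(Pⱼ⁽ᵏ⁺¹⁾)²` by parts on every cell, the boundary terms telescope because `u` is
`C^{p-1}`, and the two remaining ones vanish because one of `k`, `k + 1` is odd; so
`N (k+1) = -∑ⱼ ∫ Pⱼ⁽ᵏ⁺²⁾ Pⱼ⁽ᵏ⁾` and Cauchy–Schwarz gives `N (k+1)² ≤ N k * N (k+2)`.
The ratios `N (k+1) / N k` are therefore nonincreasing, and the last one is at most `12 / h²`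
because `Pⱼ⁽ᵖ⁻¹⁾` is affine. Hence `∫ u'² ≤ 12 h⁻² ∫ u²`.

Every line parallel to a coordinate axis meets `w ∈ W̃_{p,h}` in a reduced spline, so by Fubini
each squared partial derivative of `w` has integral at most `12 h⁻² ‖w‖²`; summing over the `d`
directions gives the constant `12 d h⁻² = (2 √(3d) h⁻¹)²`.
-/

open Polynomial Filter Topology
open scoped ENNReal

namespace Polynomial

theorem iterate_deriv_eval (P : ℝ[X]) (k : ℕ) :
    deriv^[k] (fun x => P.eval x) = fun x => (derivative^[k] P).eval x := by
  induction k generalizing P with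
  | zero => rfl
  | succ k ih =>
    rw [Function.iterate_succ_apply, Function.iterate_succ_apply, ← ih]
    congr 1
    funext x
    exact Polynomial.deriv P

theorem integral_derivative_sq (Q : ℝ[X]) (α β : ℝ) :
    ∫ t in α..β, (derivative Q).eval t ^ 2 =
      (derivative Q * Q).eval β - (derivative Q * Q).eval α -
        ∫ t in α..β, (derivative (derivative Q)).eval t * Q.eval t := by
  simp only [sq, eval_mul]
  exact intervalIntegral.integral_mul_deriv_eq_deriv_mul
    (fun x _ => (derivative Q).hasDerivAt x) (fun x _ => Q.hasDerivAt x)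
    ((derivative _).continuous.intervalIntegrable _ _)
    ((derivative Q).continuous.intervalIntegrable _ _)

/-- The constant: with `L = β - α` and `m` the midpoint,
`∫ (c₁ t + c₀)² = L (c₁ m + c₀)² + c₁² L³ / 12 ≥ c₁² L³ / 12`. -/
theorem integral_derivative_sq_le_of_natDegree_le_one {Q : ℝ[X]} (hQ : Q.natDegree ≤ 1)
    {α β : ℝ} (hαβ : α < β) :
    ∫ t in α..β, (derivative Q).eval t ^ 2 ≤ 12 / (β - α) ^ 2 * ∫ t in α..β, Q.eval t ^ 2 := by
  rw [eq_X_add_C_of_natDegree_le_one hQ]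
  set c₁ := Q.coeff 1
  set c₀ := Q.coeff 0
  have hexp : ∀ t : ℝ,
      (C c₁ * X + C c₀).eval t ^ 2 = c₁ ^ 2 * t ^ 2 + 2 * c₁ * c₀ * t + c₀ ^ 2 := fun t => by
    simp only [eval_add, eval_mul, eval_C, eval_X]
    ring
  simp only [hexp, derivative_add, derivative_mul, derivative_C, derivative_X, zero_mul, mul_one,
    zero_add, add_zero, eval_C]
  rw [intervalIntegral.integral_add, intervalIntegral.integral_add,
    intervalIntegral.integral_const_mul, intervalIntegral.integral_const_mul, integral_pow,
    integral_id, intervalIntegral.integral_const, intervalIntegral.integral_const]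
  · simp only [smul_eq_mul]
    have hL : 0 < β - α := by linarith
    rw [div_mul_eq_mul_div, le_div_iff₀ (by positivity)]
    nlinarith [mul_nonneg hL.le (sq_nonneg (c₁ * (α + β) + 2 * c₀))]
  all_goals exact Continuous.intervalIntegrable (by fun_prop) _ _

end Polynomial

theorem sq_sum_integral_mul_le {ι : Type*} (s : Finset ι) {α β : ι → ℝ}
    (hαβ : ∀ i, α i ≤ β i) {f g : ι → ℝ → ℝ} (hf : ∀ i, Continuous (f i))
    (hg : ∀ i, Continuous (g i)) :
    (∑ i ∈ s, ∫ t in α i..β i, f i t * g i t) ^ 2 ≤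
      (∑ i ∈ s, ∫ t in α i..β i, f i t ^ 2) * ∑ i ∈ s, ∫ t in α i..β i, g i t ^ 2 := by
  have hquad : ∀ r : ℝ, 0 ≤ (∑ i ∈ s, ∫ t in α i..β i, g i t ^ 2) * (r * r) +
      (2 * ∑ i ∈ s, ∫ t in α i..β i, f i t * g i t) * r +
        ∑ i ∈ s, ∫ t in α i..β i, f i t ^ 2 := by
    intro r
    have hexp : ∀ i, ∫ t in α i..β i, (f i t + r * g i t) ^ 2 =
        (∫ t in α i..β i, g i t ^ 2) * (r * r) + 2 * (∫ t in α i..β i, f i t * g i t) * r +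
          ∫ t in α i..β i, f i t ^ 2 := by
      intro i
      have hfi := hf i
      have hgi := hg i
      have hpt : ∀ t, (f i t + r * g i t) ^ 2 =
          f i t ^ 2 + (2 * r) * (f i t * g i t) + (r * r) * g i t ^ 2 := fun t => by ring
      simp only [hpt]
      rw [intervalIntegral.integral_add, intervalIntegral.integral_add,
        intervalIntegral.integral_const_mul, intervalIntegral.integral_const_mul]
      · ring
      all_goals exact Continuous.intervalIntegrable (by fun_prop) _ _
    calc 0 ≤ ∑ i ∈ s, ∫ t in α i..β i, (f i t + r * g i t) ^ 2 :=
          Finset.sum_nonneg fun i _ =>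
            intervalIntegral.integral_nonneg (hαβ i) fun t _ => sq_nonneg _
      _ = _ := by simp only [hexp, Finset.sum_add_distrib, ← Finset.sum_mul, Finset.mul_sum]
  have hdiscr := discrim_le_zero hquad
  rw [discrim] at hdiscr
  nlinarith

theorem le_mul_of_sq_le_mul_succ {N : ℕ → ℝ} {c : ℝ} (hc : 0 ≤ c) (hN : ∀ k, 0 ≤ N k) (m : ℕ)
    (hconv : ∀ k < m, N (k + 1) ^ 2 ≤ N k * N (k + 2)) (htop : N (m + 1) ≤ c * N m) :
    N 1 ≤ c * N 0 := by
  induction m generalizing N with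
  | zero => exact htop
  | succ m ih =>
    have h21 : N 2 ≤ c * N 1 :=
      ih (N := fun k => N (k + 1)) (fun k => hN _) (fun k hk => hconv (k + 1) (by omega)) htop
    rcases (hN 1).eq_or_lt with h0 | hpos
    · rw [← h0]
      exact mul_nonneg hc (hN 0)
    · refine le_of_mul_le_mul_right ?_ hpos
      nlinarith [hconv 0 (by omega), mul_le_mul_of_nonneg_left h21 (hN 0)]

theorem add_mul_le_add_add_one_mul {a h : ℝ} (hh : 0 ≤ h) (j : ℕ) :
    a + j * h ≤ a + (j + 1) * h := by
  nlinarith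

section Splines

variable {p n : ℕ} {h a b : ℝ} {u : ℝ → ℝ}

theorem eqOn_iteratedDerivWithin_of_eqOn_Icc {P : ℝ[X]} {s : Set ℝ} {α β : ℝ} {k : ℕ}
    (hs : UniqueDiffOn ℝ s) (hαβ : α < β) (hsub : Icc α β ⊆ s)
    (hcont : ContinuousOn (iteratedDerivWithin k u s) s)
    (hu : EqOn u (fun x => P.eval x) (Icc α β)) :
    EqOn (iteratedDerivWithin k u s) (fun x => (derivative^[k] P).eval x) (Icc α β) := by
  refine EqOn.of_subset_closure (s := Ioo α β) ?_ (hcont.mono hsub)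
    (derivative^[k] P).continuous.continuousOn Ioo_subset_Icc_self (closure_Ioo hαβ.ne).ge
  intro x hx
  have hloc : u =ᶠ[𝓝[s] x] fun x => P.eval x := nhdsWithin_le_nhds <|
    eventuallyEq_of_mem (Ioo_mem_nhds hx.1 hx.2) (hu.mono Ioo_subset_Icc_self)
  have hP : ContDiff ℝ k fun x => P.eval x := by simpa using P.contDiff_aeval (𝕜 := ℝ) k
  rw [hloc.iteratedDerivWithin_eq (hu (Ioo_subset_Icc_self hx)),
    iteratedDerivWithin_eq_iteratedDeriv hs hP.contDiffAt (hsub (Ioo_subset_Icc_self hx)),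
    iteratedDeriv_eq_iterate, Polynomial.iterate_deriv_eval]

theorem IsSplineOn.exists_pieces (hh : 0 < h) (hb : b = a + n * h)
    (hu : IsSplineOn p n h a b u) :
    ∃ P : ℕ → ℝ[X], ∀ j < n, (P j).natDegree ≤ p ∧ ∀ k ≤ p - 1,
      EqOn (iteratedDerivWithin k u (Icc a b)) (fun x => (derivative^[k] (P j)).eval x)
        (Icc (a + j * h) (a + (j + 1) * h)) := by
  choose! P hdeg hP using hu.2
  refine ⟨P, fun j hj => ⟨hdeg j hj, fun k hk => ?_⟩⟩
  have hjn : (j : ℝ) + 1 ≤ n := by exact_mod_cast hj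
  have hj0 : (0 : ℝ) ≤ j := j.cast_nonneg
  have hab : a < b := by rw [hb]; nlinarith
  have hcell : Icc (a + j * h) (a + (j + 1) * h) ⊆ Icc a b :=
    Icc_subset_Icc (by nlinarith) (by rw [hb]; nlinarith)
  exact eqOn_iteratedDerivWithin_of_eqOn_Icc (uniqueDiffOn_Icc hab) (by linarith) hcell
    (hu.1.continuousOn_iteratedDerivWithin (by exact_mod_cast hk) (uniqueDiffOn_Icc hab))
    (hP j hj)

theorem IsReducedSplineOn.iteratedDerivWithin_succ_mul_eq_zero
    (hu : IsReducedSplineOn p n h a b u) {k : ℕ} (hk : k + 1 < p) :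
    iteratedDerivWithin (k + 1) u (Icc a b) a * iteratedDerivWithin k u (Icc a b) a = 0 ∧
      iteratedDerivWithin (k + 1) u (Icc a b) b * iteratedDerivWithin k u (Icc a b) b = 0 := by
  rcases Nat.even_or_odd k with ⟨l, rfl⟩ | ⟨l, rfl⟩
  · obtain ⟨ha, hb⟩ := hu.2 l (by omega)
    rw [show l + l + 1 = 2 * l + 1 by omega, ha, hb, zero_mul, zero_mul]
    exact ⟨rfl, rfl⟩
  · obtain ⟨ha, hb⟩ := hu.2 l (by omega)
    rw [ha, hb, mul_zero, mul_zero]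
    exact ⟨rfl, rfl⟩

end Splines

def reducedSplineSubmodule (p n : ℕ) (h : ℝ) {a b : ℝ} (hab : a < b) :
    Submodule ℝ (ℝ → ℝ) where
  carrier := {u | IsReducedSplineOn p n h a b u}
  zero_mem' :=
    ⟨⟨contDiffOn_const, fun _ _ => ⟨0, by simp, fun _ _ => by simp⟩⟩, fun _ _ => by
      simp [Pi.zero_def]⟩
  add_mem' := by
    rintro u v ⟨⟨hu, hupoly⟩, hubd⟩ ⟨⟨hv, hvpoly⟩, hvbd⟩
    refine ⟨⟨hu.add hv, fun j hj => ?_⟩, fun l hl => ?_⟩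
    · obtain ⟨P, hP, hPu⟩ := hupoly j hj
      obtain ⟨Q, hQ, hQv⟩ := hvpoly j hj
      exact ⟨P + Q, (natDegree_add_le P Q).trans (max_le hP hQ), fun x hx => by
        simp [hPu x hx, hQv x hx]⟩
    · have hle : ((2 * l + 1 : ℕ) : WithTop ℕ∞) ≤ ((p - 1 : ℕ) : WithTop ℕ∞) := by
        exact_mod_cast (by omega : 2 * l + 1 ≤ p - 1)
      have hadd : ∀ x ∈ Icc a b, iteratedDerivWithin (2 * l + 1) (u + v) (Icc a b) x =
          iteratedDerivWithin (2 * l + 1) u (Icc a b) x +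
            iteratedDerivWithin (2 * l + 1) v (Icc a b) x := fun x hx =>
        iteratedDerivWithin_add hx (uniqueDiffOn_Icc hab) (hu.of_le hle x hx) (hv.of_le hle x hx)
      rw [hadd a (left_mem_Icc.mpr hab.le), hadd b (right_mem_Icc.mpr hab.le), (hubd l hl).1,
        (hubd l hl).2, (hvbd l hl).1, (hvbd l hl).2, add_zero]
      exact ⟨rfl, rfl⟩
  smul_mem' := by
    rintro c u ⟨⟨hu, hupoly⟩, hubd⟩
    refine ⟨⟨hu.const_smul c, fun j hj => ?_⟩, fun l hl => ?_⟩
    · obtain ⟨P, hP, hPu⟩ := hupoly j hj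
      exact ⟨C c * P, (natDegree_C_mul_le c P).trans hP, fun x hx => by simp [hPu x hx]⟩
    · simp only [iteratedDerivWithin_const_smul_field, (hubd l hl).1, (hubd l hl).2, smul_zero,
        and_self]

noncomputable def brokenSeminormSq (P : ℕ → ℝ[X]) (n : ℕ) (a h : ℝ) (k : ℕ) : ℝ :=
  ∑ j ∈ Finset.range n, ∫ t in (a + j * h)..(a + (j + 1) * h), (derivative^[k] (P j)).eval t ^ 2

section BrokenSeminormSq

variable {P : ℕ → ℝ[X]} {n : ℕ} {a h : ℝ}

theorem brokenSeminormSq_nonneg (hh : 0 ≤ h) (k : ℕ) : 0 ≤ brokenSeminormSq P n a h k :=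
  Finset.sum_nonneg fun j _ =>
    intervalIntegral.integral_nonneg (add_mul_le_add_add_one_mul hh j) fun _ _ => sq_nonneg _

/-- `ψ j` is the common value at the node `a + j h` of the boundary terms of the integrations by
parts on the two cells meeting there, so that these terms telescope. -/
theorem brokenSeminormSq_sq_le (hh : 0 ≤ h) {k : ℕ} (ψ : ℕ → ℝ)
    (hψ : ∀ j < n,
      (derivative^[k + 1] (P j) * derivative^[k] (P j)).eval (a + j * h) = ψ j ∧
      (derivative^[k + 1] (P j) * derivative^[k] (P j)).eval (a + (j + 1) * h) = ψ (j + 1))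
    (hψ0 : ψ 0 = 0) (hψn : ψ n = 0) :
    brokenSeminormSq P n a h (k + 1) ^ 2 ≤
      brokenSeminormSq P n a h k * brokenSeminormSq P n a h (k + 2) := by
  have hibp : brokenSeminormSq P n a h (k + 1) = -∑ j ∈ Finset.range n,
      ∫ t in (a + j * h)..(a + (j + 1) * h),
        (derivative^[k + 2] (P j)).eval t * (derivative^[k] (P j)).eval t := by
    have hcell : ∀ j ∈ Finset.range n,
        ∫ t in (a + j * h)..(a + (j + 1) * h), (derivative^[k + 1] (P j)).eval t ^ 2 =
          (ψ (j + 1) - ψ j) - ∫ t in (a + j * h)..(a + (j + 1) * h),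
            (derivative^[k + 2] (P j)).eval t * (derivative^[k] (P j)).eval t := by
      intro j hj
      obtain ⟨hl, hr⟩ := hψ j (Finset.mem_range.mp hj)
      simp only [Function.iterate_succ_apply'] at hl hr ⊢
      rw [Polynomial.integral_derivative_sq, hl, hr]
    rw [brokenSeminormSq, Finset.sum_congr rfl hcell, Finset.sum_sub_distrib,
      Finset.sum_range_sub, hψ0, hψn]
    ring
  rw [hibp, neg_sq, mul_comm]
  exact sq_sum_integral_mul_le _ (add_mul_le_add_add_one_mul hh)
    (fun _ => Polynomial.continuous _) (fun _ => Polynomial.continuous _)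

theorem brokenSeminormSq_succ_le {m : ℕ} (hh : 0 < h)
    (hdeg : ∀ j < n, (P j).natDegree ≤ m + 1) :
    brokenSeminormSq P n a h (m + 1) ≤ 12 / h ^ 2 * brokenSeminormSq P n a h m := by
  rw [brokenSeminormSq, brokenSeminormSq, Finset.mul_sum]
  refine Finset.sum_le_sum fun j hj => ?_
  have hlin : (derivative^[m] (P j)).natDegree ≤ 1 :=
    (natDegree_iterate_derivative _ m).trans (by have := hdeg j (Finset.mem_range.mp hj); omega)
  have hlen : a + (j + 1) * h - (a + j * h) = h := by ring
  have := integral_derivative_sq_le_of_natDegree_le_one hlin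
    (show a + j * h < a + (j + 1) * h by linarith)
  rwa [hlen, ← Function.iterate_succ_apply' derivative] at this

end BrokenSeminormSq

theorem lintegral_Ioc_eq_sum_cells (μ : Measure ℝ) (f : ℝ → ℝ≥0∞) (a : ℝ) {h : ℝ}
    (hh : 0 ≤ h) (n : ℕ) :
    ∫⁻ t in Ioc a (a + n * h), f t ∂μ =
      ∑ j ∈ Finset.range n, ∫⁻ t in Ioc (a + j * h) (a + (j + 1) * h), f t ∂μ := by
  induction n with
  | zero => simp
  | succ n ih =>
    have hn : (0 : ℝ) ≤ n * h := by positivity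
    rw [Finset.sum_range_succ, ← ih, Nat.cast_succ,
      ← Ioc_union_Ioc_eq_Ioc (by linarith) (add_mul_le_add_add_one_mul hh n),
      lintegral_union measurableSet_Ioc (Ioc_disjoint_Ioc_of_le le_rfl)]

theorem lintegral_sq_eq_brokenSeminormSq {v : ℝ → ℝ} {P : ℕ → ℝ[X]} {n k : ℕ} {a h : ℝ}
    (hh : 0 ≤ h) (hv : ∀ j < n, EqOn v (fun x => (derivative^[k] (P j)).eval x)
      (Ioo (a + j * h) (a + (j + 1) * h))) :
    ∫⁻ t in Ioo a (a + n * h), ENNReal.ofReal (v t ^ 2) =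
      ENNReal.ofReal (brokenSeminormSq P n a h k) := by
  rw [setLIntegral_congr Ioo_ae_eq_Ioc, lintegral_Ioc_eq_sum_cells _ _ _ hh, brokenSeminormSq,
    ENNReal.ofReal_sum_of_nonneg fun j _ => intervalIntegral.integral_nonneg
      (add_mul_le_add_add_one_mul hh j) fun _ _ => sq_nonneg _]
  refine Finset.sum_congr rfl fun j hj => ?_
  rw [← setLIntegral_congr Ioo_ae_eq_Ioc,
    setLIntegral_congr_fun measurableSet_Ioo fun t ht => by
      rw [hv j (Finset.mem_range.mp hj) ht],
    ← ofReal_integral_eq_lintegral_ofReal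
      ((Continuous.integrableOn_Icc (by fun_prop)).mono_set Ioo_subset_Icc_self)
      (ae_of_all _ fun _ => sq_nonneg _),
    intervalIntegral.integral_of_le (add_mul_le_add_add_one_mul hh j),
    integral_Ioc_eq_integral_Ioo]

theorem IsReducedSplineOn.lintegral_deriv_sq_le {p n : ℕ} {h a b : ℝ} {u : ℝ → ℝ}
    (hp : 1 ≤ p) (hh : 0 < h) (hb : b = a + n * h) (hu : IsReducedSplineOn p n h a b u) :
    ∫⁻ t in Ioo a b, ENNReal.ofReal (deriv u t ^ 2) ≤
      ENNReal.ofReal (12 / h ^ 2) * ∫⁻ t in Ioo a b, ENNReal.ofReal (u t ^ 2) := by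
  obtain ⟨m, rfl⟩ : ∃ m, p = m + 1 := ⟨p - 1, by omega⟩
  obtain ⟨P, hP⟩ := hu.1.exists_pieces hh hb
  set φ := fun k => iteratedDerivWithin k u (Icc a b)
  have hu_eq : ∀ j < n, EqOn u (fun x => (derivative^[0] (P j)).eval x)
      (Ioo (a + j * h) (a + (j + 1) * h)) := fun j hj x hx =>
    (hP j hj).2 0 (Nat.zero_le _) (Ioo_subset_Icc_self hx)
  have hdu_eq : ∀ j < n, EqOn (deriv u) (fun x => (derivative^[1] (P j)).eval x)
      (Ioo (a + j * h) (a + (j + 1) * h)) := fun j hj x hx => by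
    rw [((hu_eq j hj).eventuallyEq_of_mem (Ioo_mem_nhds hx.1 hx.2)).deriv_eq]
    exact Polynomial.deriv _
  have hnode : ∀ k ≤ m, ∀ j < n,
      φ k (a + j * h) = (derivative^[k] (P j)).eval (a + j * h) ∧
        φ k (a + (j + 1) * h) = (derivative^[k] (P j)).eval (a + (j + 1) * h) :=
    fun k hk j hj =>
      ⟨(hP j hj).2 k hk (left_mem_Icc.mpr (add_mul_le_add_add_one_mul hh.le j)),
        (hP j hj).2 k hk (right_mem_Icc.mpr (add_mul_le_add_add_one_mul hh.le j))⟩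
  have hlogconv : ∀ k < m, brokenSeminormSq P n a h (k + 1) ^ 2 ≤
      brokenSeminormSq P n a h k * brokenSeminormSq P n a h (k + 2) := fun k hk => by
    have hends := hu.iteratedDerivWithin_succ_mul_eq_zero (by omega : k + 1 < m + 1)
    refine brokenSeminormSq_sq_le hh.le (fun j => φ (k + 1) (a + j * h) * φ k (a + j * h))
      (fun j hj => ?_) (by simpa using hends.1) (by simpa [← hb] using hends.2)
    obtain ⟨h1l, h1r⟩ := hnode (k + 1) (by omega) j hj
    obtain ⟨h0l, h0r⟩ := hnode k (by omega) j hj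
    push_cast
    simp only [eval_mul, h1l, h1r, h0l, h0r, and_self]
  have key := le_mul_of_sq_le_mul_succ (by positivity) (brokenSeminormSq_nonneg hh.le) m
    hlogconv (brokenSeminormSq_succ_le hh fun j hj => (hP j hj).1)
  rw [hb, lintegral_sq_eq_brokenSeminormSq hh.le hu_eq,
    lintegral_sq_eq_brokenSeminormSq hh.le hdu_eq, ← ENNReal.ofReal_mul (by positivity)]
  exact ENNReal.ofReal_le_ofReal key

section TensorProduct

variable {d p n : ℕ} {h : ℝ} {w : (Fin d → ℝ) → ℝ}

theorem isReducedSplineOn_update_of_mem_span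
    (hw : w ∈ Submodule.span ℝ (TensorReduced p n d h)) (l : Fin d) (y : Fin d → ℝ) :
    IsReducedSplineOn p n h 0 1 (fun t => w (Function.update y l t)) := by
  have hspan : Submodule.span ℝ (TensorReduced p n d h) ≤
      (reducedSplineSubmodule p n h zero_lt_one).comap
        (LinearMap.funLeft ℝ ℝ (Function.update y l)) := by
    rw [Submodule.span_le]
    rintro _ ⟨f, hf, rfl⟩
    have hprod : (fun t => ∏ m, f m (Function.update y l t m)) =
        (∏ m ∈ Finset.univ \ {l}, f m (y m)) • f l := by
      funext t
      rw [Finset.prod_congr rfl fun m _ => Function.apply_update f y l t m,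
        Finset.prod_update_of_mem (Finset.mem_univ l), Pi.smul_apply, smul_eq_mul, mul_comm]
    rw [SetLike.mem_coe, Submodule.mem_comap]
    change (fun t => ∏ m, f m (Function.update y l t m)) ∈ reducedSplineSubmodule p n h _
    rw [hprod]
    exact (reducedSplineSubmodule p n h zero_lt_one).smul_mem _ (hf l)
  exact Submodule.mem_comap.mp (hspan hw)

theorem continuousOn_of_mem_span_tensorReduced
    (hw : w ∈ Submodule.span ℝ (TensorReduced p n d h)) :
    ContinuousOn w (univ.pi fun _ => Icc 0 1) := by
  induction hw using Submodule.span_induction with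
  | mem _ hx =>
    obtain ⟨f, hf, rfl⟩ := hx
    exact continuousOn_finsetProd _ fun m _ =>
      (hf m).1.1.continuousOn.comp (continuous_apply m).continuousOn fun x hx => hx m trivial
  | zero => exact continuousOn_const
  | add _ _ _ _ hu hv => exact hu.add hv
  | smul c _ _ hu => exact hu.const_smul c

end TensorProduct

/-- An inequality, not an equality, because `fderiv` is `0` where `w` is not differentiable. -/
theorem sq_fderiv_apply_single_le_sq_deriv_update {ι : Type*} [Fintype ι] [DecidableEq ι]
    (w : (ι → ℝ) → ℝ) (x : ι → ℝ) (l : ι) :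
    fderiv ℝ w x (Pi.single l 1) ^ 2 ≤ deriv (fun t => w (Function.update x l t)) (x l) ^ 2 := by
  by_cases hw : DifferentiableAt ℝ w x
  · rw [← Function.update_eq_self l x] at hw
    have := hw.hasFDerivAt.comp_hasDerivAt (x l) (hasDerivAt_update x l (x l))
    rw [Function.comp_def, Function.update_eq_self] at this
    rw [this.deriv]
  · rw [fderiv_zero_of_not_differentiableAt hw, zero_apply, sq, zero_mul]
    exact sq_nonneg _

theorem update_mem_univ_pi_iff {ι : Type*} [DecidableEq ι] {X : ι → Type*}
    {s : ∀ i, Set (X i)} {x : ∀ i, X i} {l : ι} {t : X l} :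
    Function.update x l t ∈ univ.pi s ↔ (∀ i ≠ l, x i ∈ s i) ∧ t ∈ s l := by
  rw [update_mem_pi_iff]
  simp [Set.mem_pi]

/-- Only the restrictions of `f` and `g` to the box matter, so only the indicators need to be
measurable. -/
theorem setLIntegral_univ_pi_le_mul_of_slices {ι : Type*} [Fintype ι] [DecidableEq ι]
    {X : ι → Type*} [∀ i, MeasurableSpace (X i)] (μ : ∀ i, Measure (X i))
    [∀ i, SigmaFinite (μ i)] {s : ∀ i, Set (X i)} (hs : ∀ i, MeasurableSet (s i))
    {f g : (∀ i, X i) → ℝ≥0∞} (hf : Measurable ((univ.pi s).indicator f))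
    (hg : Measurable ((univ.pi s).indicator g)) (l : ι) {c : ℝ≥0∞} (hc : c ≠ ∞)
    (hslice : ∀ x, ∫⁻ t in s l, f (Function.update x l t) ∂μ l ≤
      c * ∫⁻ t in s l, g (Function.update x l t) ∂μ l) :
    ∫⁻ x in univ.pi s, f x ∂Measure.pi μ ≤ c * ∫⁻ x in univ.pi s, g x ∂Measure.pi μ := by
  rcases isEmpty_or_nonempty (∀ i, X i) with _ | ⟨⟨x₀⟩⟩
  · simp
  have hsplit : ∀ F : (∀ i, X i) → ℝ≥0∞, Measurable F → ∫⁻ x, F x ∂Measure.pi μ =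
      (∫⋯∫⁻_Finset.univ.erase l, (fun x => ∫⁻ t, F (Function.update x l t) ∂μ l) ∂μ) x₀ :=
    fun F hF => by
      rw [lintegral_eq_lmarginal_univ x₀, lmarginal_erase' _ hF (Finset.mem_univ l)]
  have hslice' : ∀ x, ∫⁻ t, (univ.pi s).indicator f (Function.update x l t) ∂μ l ≤
      c * ∫⁻ t, (univ.pi s).indicator g (Function.update x l t) ∂μ l := by
    intro x
    by_cases hx : ∀ i ≠ l, x i ∈ s i
    · have hind : ∀ F : (∀ i, X i) → ℝ≥0∞,
          (fun t => (univ.pi s).indicator F (Function.update x l t)) =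
            (s l).indicator fun t => F (Function.update x l t) := by
        intro F
        funext t
        by_cases ht : t ∈ s l
        · rw [indicator_of_mem (update_mem_univ_pi_iff.mpr ⟨hx, ht⟩), indicator_of_mem ht]
        · rw [indicator_of_notMem (fun h => ht (update_mem_univ_pi_iff.mp h).2),
            indicator_of_notMem ht]
      rw [hind, hind, lintegral_indicator (hs l), lintegral_indicator (hs l)]
      exact hslice x
    · have h0 : ∀ t, (univ.pi s).indicator f (Function.update x l t) = 0 := fun t =>
        indicator_of_notMem (fun h => hx (update_mem_univ_pi_iff.mp h).1) _
      simp [h0]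
  rw [← lintegral_indicator (MeasurableSet.univ_pi hs),
    ← lintegral_indicator (MeasurableSet.univ_pi hs), hsplit _ hf, hsplit _ hg]
  calc _ ≤ (∫⋯∫⁻_Finset.univ.erase l,
        (fun x => c * ∫⁻ t, (univ.pi s).indicator g (Function.update x l t) ∂μ l) ∂μ) x₀ :=
      lmarginal_mono hslice' x₀
    _ = _ := lintegral_const_mul' c _ hc

theorem setIntegral_le_mul_of_setLIntegral_ofReal_le {α : Type*} [MeasurableSpace α]
    {μ : Measure α} {s : Set α} {F G : α → ℝ} (hF : ∀ x, 0 ≤ F x) (hG : ∀ x, 0 ≤ G x)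
    (hGi : IntegrableOn G s μ) {c : ℝ} (hc : 0 ≤ c)
    (hle : ∫⁻ x in s, ENNReal.ofReal (F x) ∂μ ≤
      ENNReal.ofReal c * ∫⁻ x in s, ENNReal.ofReal (G x) ∂μ) :
    ∫ x in s, F x ∂μ ≤ c * ∫ x in s, G x ∂μ := by
  have hrhs : 0 ≤ c * ∫ x in s, G x ∂μ := mul_nonneg hc (integral_nonneg hG)
  by_cases hFi : IntegrableOn F s μ
  · rwa [← ENNReal.ofReal_le_ofReal_iff hrhs, ENNReal.ofReal_mul hc,
      ofReal_integral_eq_lintegral_ofReal hFi (ae_of_all _ hF),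
      ofReal_integral_eq_lintegral_ofReal hGi (ae_of_all _ hG)]
  · rwa [integral_undef hFi]

theorem setLIntegral_sq_fderiv_apply_single_le_of_mem_span {d p n : ℕ} {h : ℝ}
    (hp : 1 ≤ p) (hh : 0 < h) (hgrid : (1 : ℝ) = n * h) {w : (Fin d → ℝ) → ℝ}
    (hw : w ∈ Submodule.span ℝ (TensorReduced p n d h)) (l : Fin d) :
    ∫⁻ x in univ.pi fun _ => Ioo 0 1, ENNReal.ofReal (fderiv ℝ w x (Pi.single l 1) ^ 2) ≤
      ENNReal.ofReal (12 / h ^ 2) *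
        ∫⁻ x in univ.pi fun _ => Ioo 0 1, ENNReal.ofReal (w x ^ 2) := by
  classical
  have hcube : MeasurableSet (univ.pi fun _ : Fin d => Ioo (0 : ℝ) 1) :=
    MeasurableSet.univ_pi fun _ => measurableSet_Ioo
  refine setLIntegral_univ_pi_le_mul_of_slices (fun _ => volume) (fun _ => measurableSet_Ioo)
    (((measurable_fderiv_apply_const ℝ w _).pow_const 2).ennreal_ofReal.indicator hcube) ?_ l
    ENNReal.ofReal_ne_top fun x => ?_
  · rw [← piecewise_eq_indicator]
    exact ContinuousOn.measurable_piecewise (ENNReal.continuous_ofReal.comp_continuousOn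
      (((continuousOn_of_mem_span_tensorReduced hw).mono
        (pi_mono fun _ _ => Ioo_subset_Icc_self)).pow 2)) continuousOn_const hcube
  calc _ ≤ ∫⁻ t in Ioo 0 1,
        ENNReal.ofReal (deriv (fun t => w (Function.update x l t)) t ^ 2) :=
        lintegral_mono fun t => ENNReal.ofReal_le_ofReal <| by
          simpa using sq_fderiv_apply_single_le_sq_deriv_update w (Function.update x l t) l
    _ ≤ _ := (isReducedSplineOn_update_of_mem_span hw l x).lintegral_deriv_sq_le hp hh
        (by simpa using hgrid)

theorem tensor_product_inverse_inequality_general (d p n : ℕ) (h : ℝ)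
    (hp : 1 ≤ p) (hh : 0 < h) (hgrid : (1 : ℝ) = n * h)
    (w : (Fin d → ℝ) → ℝ) (hw : w ∈ Submodule.span ℝ (TensorReduced p n d h)) :
    Real.sqrt (∫ x in Set.univ.pi fun _ : Fin d => Set.Ioo (0 : ℝ) 1,
        ∑ l, (fderiv ℝ w x (Pi.single l 1)) ^ 2) ≤
      2 * Real.sqrt (3 * d) * h⁻¹ *
        Real.sqrt (∫ x in Set.univ.pi fun _ : Fin d => Set.Ioo (0 : ℝ) 1, w x ^ 2) := by
  set cube := univ.pi fun _ : Fin d => Ioo (0 : ℝ) 1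
  have hsum : ∫⁻ x in cube, ENNReal.ofReal (∑ l, fderiv ℝ w x (Pi.single l 1) ^ 2) ≤
      ENNReal.ofReal (d * (12 / h ^ 2)) * ∫⁻ x in cube, ENNReal.ofReal (w x ^ 2) := by
    simp_rw [ENNReal.ofReal_sum_of_nonneg fun _ _ => sq_nonneg _]
    rw [lintegral_finsetSum _ fun l _ =>
        ((measurable_fderiv_apply_const ℝ w _).pow_const 2).ennreal_ofReal,
      ENNReal.ofReal_mul (by positivity), ENNReal.ofReal_natCast, mul_assoc]
    calc _ ≤ ∑ _l : Fin d, ENNReal.ofReal (12 / h ^ 2) *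
          ∫⁻ x in cube, ENNReal.ofReal (w x ^ 2) := Finset.sum_le_sum fun l _ =>
            setLIntegral_sq_fderiv_apply_single_le_of_mem_span hp hh hgrid hw l
      _ = _ := by simp
  have hwi : IntegrableOn (fun x => w x ^ 2) cube :=
    (((continuousOn_of_mem_span_tensorReduced hw).pow 2).integrableOn_compact
      (isCompact_univ_pi fun _ => isCompact_Icc)).mono_set (pi_mono fun _ _ => Ioo_subset_Icc_self)
  have hconst : (d : ℝ) * (12 / h ^ 2) = (2 * Real.sqrt (3 * d) * h⁻¹) ^ 2 := by
    rw [mul_pow, mul_pow, Real.sq_sqrt (by positivity)]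
    field_simp
    ring
  calc _ ≤ Real.sqrt ((d : ℝ) * (12 / h ^ 2) * ∫ x in cube, w x ^ 2) :=
        Real.sqrt_le_sqrt <| setIntegral_le_mul_of_setLIntegral_ofReal_le
          (fun _ => Finset.sum_nonneg fun _ _ => sq_nonneg _) (fun _ => sq_nonneg _) hwi
          (by positivity) hsum
    _ = _ := by rw [Real.sqrt_mul (by positivity), hconst, Real.sqrt_sq (by positivity)]

/-- Theorem 9 of the paper: inverse inequality in the tensor-product
reduced spline space on `(0,1)^d`. -/
theorem tensor_product_inverse_inequality (d p n : ℕ) (h : ℝ)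
    (hd : 1 ≤ d) (hp : 1 ≤ p) (hh : 0 < h) (hn : 0 < n) (hgrid : (1 : ℝ) = n * h)
    (w : (Fin d → ℝ) → ℝ) (hw : w ∈ Submodule.span ℝ (TensorReduced p n d h)) :
    Real.sqrt (∫ x in Set.univ.pi fun _ : Fin d => Set.Ioo (0 : ℝ) 1,
        ∑ l, (fderiv ℝ w x (Pi.single l 1)) ^ 2) ≤
      2 * Real.sqrt (3 * d) * h⁻¹ *
        Real.sqrt (∫ x in Set.univ.pi fun _ : Fin d => Set.Ioo (0 : ℝ) 1, w x ^ 2) :=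
  tensor_product_inverse_inequality_general d p n h hp hh hgrid w hw
end

section
/- Let p ≥ 1 be an integer and let c, ξ be real numbers such that either (0 ≤ c < 1 and 0 < ξ ≤ 1) or (−1 < c ≤ 0 and ξ ≥ 1). Then the denominator 2·((1+c)^p + (1−c)^p·ξ) is positive and ((1+c)^{p−1} + (1−c)^{p−1}·ξ) / ( 2·((1+c)^p + (1−c)^p·ξ) ) ≤ 1/2. -/
/-- the scalar inequality `Ψ_p(c,ξ) ≤ 1/2` bounding the spectral
radius of the 2×2 Fourier blocks of the coarse-grid projection, for all admissible
pairs `(c,ξ)`. -/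
theorem symbol_block_spectral_bound (p : ℕ) (hp : 1 ≤ p) (c ξ : ℝ)
    (hcase : (0 ≤ c ∧ c < 1 ∧ 0 < ξ ∧ ξ ≤ 1) ∨ (-1 < c ∧ c ≤ 0 ∧ 1 ≤ ξ)) :
    0 < 2 * ((1 + c) ^ p + (1 - c) ^ p * ξ) ∧
    ((1 + c) ^ (p - 1) + (1 - c) ^ (p - 1) * ξ) /
        (2 * ((1 + c) ^ p + (1 - c) ^ p * ξ)) ≤ 1 / 2 := by
  obtain ⟨q, rfl⟩ := Nat.exists_eq_add_of_le hp
  have ha : (0:ℝ) < 1 + c := by rcases hcase with ⟨h1, _, _, _⟩ | ⟨h1, _, _⟩ <;> linarith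
  have hb : (0:ℝ) < 1 - c := by rcases hcase with ⟨_, h2, _, _⟩ | ⟨_, h2, _⟩ <;> linarith
  have hξ : (0:ℝ) < ξ := by rcases hcase with ⟨_, _, h3, _⟩ | ⟨_, _, h3⟩ <;> linarith
  have hbq : (0:ℝ) < (1 - c) ^ q := pow_pos hb q
  have haq : (0:ℝ) < (1 + c) ^ q := pow_pos ha q
  have hD : (0:ℝ) < 2 * ((1 + c) ^ (1 + q) + (1 - c) ^ (1 + q) * ξ) := by
    have := pow_pos ha (1 + q)
    have := pow_pos hb (1 + q)
    positivity
  refine ⟨hD, ?_⟩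
  have hkey : c * ((1 - c) ^ q * ξ - (1 + c) ^ q) ≤ 0 := by
    rcases hcase with ⟨h1, h2, h3, h4⟩ | ⟨h1, h2, h3⟩
    · have h5 : (1 - c) ^ q ≤ (1 + c) ^ q := pow_le_pow_left₀ (le_of_lt hb) (by linarith) q
      have h6 : (1 - c) ^ q * ξ ≤ (1 - c) ^ q := by nlinarith
      apply mul_nonpos_of_nonneg_of_nonpos h1; linarith
    · have h5 : (1 + c) ^ q ≤ (1 - c) ^ q := pow_le_pow_left₀ (le_of_lt ha) (by linarith) q
      have h6 : (1 - c) ^ q ≤ (1 - c) ^ q * ξ := by nlinarith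
      apply mul_nonpos_of_nonpos_of_nonneg h2; linarith
  rw [div_le_div_iff₀ hD (by norm_num)]
  have e1 : (1 + c) ^ (1 + q) = (1 + c) ^ q * (1 + c) := by ring
  have e2 : (1 - c) ^ (1 + q) = (1 - c) ^ q * (1 - c) := by ring
  simp only [Nat.add_sub_cancel, Nat.add_sub_cancel_left, e1, e2]
  nlinarith [hkey]
end
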